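/- Let p be a non-empty palindromic factor of the m-bonacci word w_m. If p begins with the letter 0, then p = φ_m(p')·0 for some palindromic factor p' of w_m. If p begins with a letter a ≠ 0, then 0·p = φ_m(p') for some palindromic factor p' of w_m. -/
import Mathlib


/-- The finite word `u` occurs at position `j` in the infinite word `w`. -/
def OccursAt (u : List ℕ) (w : ℕ → ℕ) (j : ℕ) : Prop :=
  ∀ i < u.length, w (j + i) = u.getD i 0

/-- The finite word `u` is a prefix of the infinite word `w`. -/
def InfPrefix (u : List ℕ) (w : ℕ → ℕ) : Prop :=
  OccursAt u w 0

/-- The suffix of the infinite word `w` starting at position `j`. -/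
def suffixFrom (w : ℕ → ℕ) (j : ℕ) : ℕ → ℕ :=
  fun i => w (j + i)

/-- The finite word `u` is a palindrome. -/
def Pal (u : List ℕ) : Prop := u.reverse = u
/-- The `m`-bonacci morphism `φ_m` on letters:
`φ_m(k) = 0·(k+1)` for `0 ≤ k ≤ m-2`, and `φ_m(m-1) = 0`. -/
def phiL (m a : ℕ) : List ℕ := if a = m - 1 then [0] else [0, a + 1]

/-- The `m`-bonacci morphism applied to a finite word. -/
def phiW (m : ℕ) (u : List ℕ) : List ℕ := u.flatMap (phiL m)

/-- The iterates `h n = φ_mⁿ(0)`. -/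
def hword (m : ℕ) : ℕ → List ℕ
  | 0 => [0]
  | n + 1 => phiW m (hword m n)

/-- The `m`-bonacci word, the infinite fixed point of `φ_m` beginning with `0`
(its `i`-th letter is the `i`-th letter of any sufficiently long iterate `φ_mⁿ(0)`). -/
def mbon (m : ℕ) : ℕ → ℕ := fun i => (hword m (i + 1)).getD i 0

/-- Auxiliary course-of-values construction for the p-singular words:
`zsAux m (k+1) i` gives the correct value of the (index-shifted) p-singular word
`z_{i-1}` for every `i ≤ k`. -/
def zsAux (m : ℕ) : ℕ → ℕ → List ℕ
  | 0, _ => []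
  | k + 1, i =>
    if i < k then zsAux m k i
    else if i = 0 then []
    else if i = 1 then [0]
    else if i ≤ m then
      -- here `i = n+1` with `1 ≤ n ≤ m-1`:
      -- `z_n = z_{n-2} z_{n-3} ⋯ z_1 z_0 · n · z_0 z_1 ⋯ z_{n-3} z_{n-2}`
      (((List.range (i - 2)).map (fun j => zsAux m k (i - 2 - j))).flatten)
        ++ [i - 1]
        ++ (((List.range (i - 2)).map (fun j => zsAux m k (1 + j))).flatten)
    else
      -- here `i = n+1` with `n ≥ m`:
      -- `z_n = z_{n-2} ⋯ z_{n-(m-1)} · z_{n-m} · z_{n-(m+1)} · z_{n-m} · z_{n-(m-1)} ⋯ z_{n-2}`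
      (((List.range (m - 2)).map (fun j => zsAux m k (i - 2 - j))).flatten)
        ++ zsAux m k (i - m) ++ zsAux m k (i - m - 1) ++ zsAux m k (i - m)
        ++ (((List.range (m - 2)).map (fun j => zsAux m k (i - m + 1 + j))).flatten)

/-- The (index-shifted) p-singular words for the `m`-bonacci word:
`zsw m 0 = z₋₁ = ε`, and `zsw m (n+1) = zₙ` for `n ≥ 0`, where
`z₀ = 0`, `zₙ = z_{n-2} z_{n-3} ⋯ z_1 z_0 · n · z_0 z_1 ⋯ z_{n-3} z_{n-2}` for `1 ≤ n ≤ m-1`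
(`n` denoting the single letter `n`), and
`zₙ = z_{n-2} z_{n-3} ⋯ z_{n-(m-1)} z_{n-m} z_{n-(m+1)} z_{n-m} z_{n-(m-1)} ⋯ z_{n-3} z_{n-2}`
for `n ≥ m`. -/
def zsw (m k : ℕ) : List ℕ := zsAux m (k + 1) k

/-- The finite word `u` is a factor of the infinite word `w`. -/
def FactorOf (u : List ℕ) (w : ℕ → ℕ) : Prop :=
  ∃ j, OccursAt u w j

namespace MbonAux

lemma phiL_len_pos (m a : ℕ) : 0 < (phiL m a).length := by
  unfold phiL; split <;> simp

lemma phiL_len_le (m a : ℕ) : (phiL m a).length ≤ 2 := by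
  unfold phiL; split <;> simp

lemma phiL_getD_zero (m a : ℕ) : (phiL m a).getD 0 0 = 0 := by
  unfold phiL; split <;> simp

lemma phiL_two (m a : ℕ) (h : (phiL m a).length = 2) :
    phiL m a = [0, a + 1] := by
  unfold phiL at *; split at h
  · simp at h
  · simp_all

lemma phiW_cons (m a : ℕ) (t : List ℕ) :
    phiW m (a :: t) = phiL m a ++ phiW m t := by simp [phiW]

lemma phiW_append (m : ℕ) (u v : List ℕ) :
    phiW m (u ++ v) = phiW m u ++ phiW m v := by simp [phiW]

lemma phiW_prefix (m : ℕ) {u v : List ℕ} (h : u <+: v) :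
    phiW m u <+: phiW m v := by
  obtain ⟨t, rfl⟩ := h
  exact ⟨phiW m t, (phiW_append m u t).symm⟩

lemma phiW_len_ge (m : ℕ) (u : List ℕ) : u.length ≤ (phiW m u).length := by
  induction u with
  | nil => simp [phiW]
  | cons a t ih =>
    have h1 := phiL_len_pos m a
    rw [phiW_cons, List.length_append, List.length_cons]
    omega

lemma phiW_head_zero (m a : ℕ) (t : List ℕ) :
    (phiW m (a :: t)).getD 0 0 = 0 := by
  rw [phiW_cons]
  have h1 := phiL_len_pos m a
  rw [List.getD_append _ _ _ _ h1]
  exact phiL_getD_zero m a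

/-- injectivity of the morphism -/
lemma phiW_inj (m : ℕ) : ∀ u v : List ℕ, phiW m u = phiW m v → u = v := by
  intro u
  induction u with
  | nil =>
    intro v h
    cases v with
    | nil => rfl
    | cons b t =>
      exfalso
      have hlen := phiL_len_pos m b
      simp [phiW] at h
      rw [h.1] at hlen; simp at hlen
  | cons a t ih =>
    intro v h
    cases v with
    | nil =>
      exfalso
      have hlen := phiL_len_pos m a
      simp [phiW] at h
      rw [h.1] at hlen; simp at hlen
    | cons b s =>
      rw [phiW_cons, phiW_cons] at h
      unfold phiL at h
      by_cases ha : a = m - 1 <;> by_cases hb : b = m - 1 <;>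
        simp [ha, hb] at h
      · rw [ha, hb, ih s h]
      · -- [0] ++ phiW t = [0, b+1] ++ phiW s : phiW t = (b+1) :: phiW s
        exfalso
        cases t with
        | nil => simp [phiW] at h
        | cons c r =>
          have h0 : (phiW m (c :: r)).getD 0 0 = 0 := phiW_head_zero m c r
          rw [h] at h0
          simp at h0
      · exfalso
        cases s with
        | nil => simp [phiW] at h
        | cons c r =>
          have h0 : (phiW m (c :: r)).getD 0 0 = 0 := phiW_head_zero m c r
          rw [← h] at h0
          simp at h0
      · obtain ⟨hab, h2⟩ := h
        rw [hab, ih s h2]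

/-- reversal identity: 0 · reverse(φ(u)) = φ(reverse u) · 0 -/
lemma phiW_rev (m : ℕ) (u : List ℕ) :
    0 :: (phiW m u).reverse = phiW m u.reverse ++ [0] := by
  induction u with
  | nil => simp [phiW]
  | cons a t ih =>
    have key : (0 : ℕ) :: (phiL m a).reverse = phiL m a ++ [0] := by
      unfold phiL; split <;> simp
    simp only [phiW_cons, List.reverse_cons, List.reverse_append, phiW_append]
    calc 0 :: ((phiW m t).reverse ++ (phiL m a).reverse)
        = (0 :: (phiW m t).reverse) ++ (phiL m a).reverse := rfl
      _ = (phiW m t.reverse ++ [0]) ++ (phiL m a).reverse := by rw [ih]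
      _ = phiW m t.reverse ++ (0 :: (phiL m a).reverse) := by simp
      _ = phiW m t.reverse ++ (phiL m a ++ [0]) := by rw [key]
      _ = phiW m t.reverse ++ phiW m [a] ++ [0] := by simp [phiW]


end MbonAux

namespace MbonAux2
open MbonAux

lemma hword_prefix_succ (m : ℕ) (hm : 2 ≤ m) (n : ℕ) :
    hword m n <+: hword m (n + 1) := by
  induction n with
  | zero =>
    show [0] <+: phiW m [0]
    have h0 : (0:ℕ) ≠ m - 1 := by omega
    simp [phiW, phiL, h0]
  | succ n ih => exact phiW_prefix m ih

lemma hword_prefix (m : ℕ) (hm : 2 ≤ m) {n n' : ℕ} (h : n ≤ n') :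
    hword m n <+: hword m n' := by
  induction n' with
  | zero => simp_all
  | succ k ih =>
    rcases Nat.eq_or_lt_of_le h with rfl | h'
    · exact List.prefix_refl _
    · exact (ih (by omega)).trans (hword_prefix_succ m hm k)

lemma hword_len (m : ℕ) (hm : 2 ≤ m) (n : ℕ) : n + 1 ≤ (hword m n).length := by
  induction n with
  | zero => simp [hword]
  | succ n ih =>
    obtain ⟨t, ht⟩ := hword_prefix m hm (Nat.zero_le n)
    have ht' : [0] ++ t = hword m n := ht
    show n + 2 ≤ (phiW m (hword m n)).length
    rw [← ht']
    have h0 : (0:ℕ) ≠ m - 1 := by omega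
    have : phiW m ([0] ++ t) = [0, 1] ++ phiW m t := by
      rw [phiW_append]; simp [phiW, phiL, h0]
    rw [this]
    have h2 := phiW_len_ge m t
    have h3 : ([0] ++ t).length = (hword m n).length := by rw [ht']
    simp at h3 ⊢
    omega

/-- getD stability across prefixes -/
lemma getD_of_prefix {u v : List ℕ} (h : u <+: v) {i : ℕ} (hi : i < u.length) :
    v.getD i 0 = u.getD i 0 := by
  obtain ⟨t, rfl⟩ := h
  rw [List.getD_append _ _ _ _ hi]

lemma mbon_eq_hword (m : ℕ) (hm : 2 ≤ m) {n i : ℕ} (hi : i < (hword m n).length) :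
    mbon m i = (hword m n).getD i 0 := by
  unfold mbon
  rcases le_total n (i + 1) with h | h
  · exact getD_of_prefix (hword_prefix m hm h) hi
  · have hi' : i < (hword m (i + 1)).length := by
      have := hword_len m hm (i + 1)
      omega
    exact (getD_of_prefix (hword_prefix m hm h) hi').symm

lemma hword_infPrefix (m : ℕ) (hm : 2 ≤ m) (n : ℕ) :
    InfPrefix (hword m n) (mbon m) := by
  intro i hi
  simpa using mbon_eq_hword m hm hi

/-- first `k` letters of the m-bonacci word -/
def pref (m k : ℕ) : List ℕ := (List.range k).map (mbon m)

@[simp] lemma pref_length (m k : ℕ) : (pref m k).length = k := by simp [pref]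

lemma pref_getD (m : ℕ) {k i : ℕ} (hi : i < k) :
    (pref m k).getD i 0 = mbon m i := by
  unfold pref
  rw [List.getD_eq_getElem _ _ (by simpa using hi)]
  simp

lemma pref_prefix (m : ℕ) {k k' : ℕ} (h : k ≤ k') : pref m k <+: pref m k' := by
  have : pref m k = (pref m k').take k := by
    simp [pref, ← List.map_take, List.take_range, Nat.min_eq_left h]
  rw [this]
  exact List.take_prefix _ _

lemma pref_eq_take_hword (m : ℕ) (hm : 2 ≤ m) {k n : ℕ}
    (h : k ≤ (hword m n).length) : pref m k = (hword m n).take k := by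
  apply List.ext_getElem
  · simp; omega
  · intro i h1 h2
    simp only [List.getElem_take]
    have hik : i < k := by simpa using h1
    rw [show (pref m k)[i] = (pref m k).getD i 0 by rw [List.getD_eq_getElem _ _ h1],
      pref_getD m hik]
    rw [show (hword m n)[i] = (hword m n).getD i 0 by
      rw [List.getD_eq_getElem]]
    exact mbon_eq_hword m hm (by omega)

/-- φ applied to any prefix of the m-bonacci word is again a prefix -/
lemma phiW_pref_infPrefix (m : ℕ) (hm : 2 ≤ m) (k : ℕ) :
    InfPrefix (phiW m (pref m k)) (mbon m) := by
  have hk : k ≤ (hword m k).length := by have := hword_len m hm k; omega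
  rw [pref_eq_take_hword m hm hk]
  have h1 : phiW m ((hword m k).take k) <+: phiW m (hword m k) :=
    phiW_prefix m (List.take_prefix _ _)
  have h2 : phiW m (hword m k) = hword m (k + 1) := rfl
  intro i hi
  obtain ⟨t, ht⟩ := h1
  have := hword_infPrefix m hm (k + 1)
  rw [← h2, ← ht] at this
  have hi' : i < (phiW m ((hword m k).take k) ++ t).length := by
    simp only [List.length_append]; omega
  have := this i hi'
  rwa [List.getD_append _ _ _ _ hi] at this

end MbonAux2

namespace MbonAux3
open MbonAux MbonAux2

/-- position in `w` where the `k`-th block `φ(w k)` starts -/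
def bpos (m k : ℕ) : ℕ := (phiW m (pref m k)).length

@[simp] lemma bpos_zero (m : ℕ) : bpos m 0 = 0 := by
  simp [bpos, pref, phiW]

lemma pref_succ (m k : ℕ) : pref m (k + 1) = pref m k ++ [mbon m k] := by
  simp [pref, List.range_succ]

lemma bpos_succ (m k : ℕ) :
    bpos m (k + 1) = bpos m k + (phiL m (mbon m k)).length := by
  unfold bpos
  rw [pref_succ, phiW_append]
  simp [phiW]

lemma bpos_lt_succ (m k : ℕ) : bpos m k < bpos m (k + 1) := by
  rw [bpos_succ]
  have := phiL_len_pos m (mbon m k)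
  omega

lemma bpos_strictMono (m : ℕ) : StrictMono (bpos m) :=
  strictMono_nat_of_lt_succ (bpos_lt_succ m)

lemma bpos_ge (m k : ℕ) : k ≤ bpos m k := by
  induction k with
  | zero => simp
  | succ k ih => have := bpos_lt_succ m k; omega

/-- letters inside the `k`-th block -/
lemma block_letters (m : ℕ) (hm : 2 ≤ m) (k : ℕ) {i : ℕ}
    (hi : i < (phiL m (mbon m k)).length) :
    mbon m (bpos m k + i) = (phiL m (mbon m k)).getD i 0 := by
  have hP := phiW_pref_infPrefix m hm (k + 1)
  have hsplit : phiW m (pref m (k + 1)) = phiW m (pref m k) ++ phiL m (mbon m k) := by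
    rw [pref_succ, phiW_append]; simp [phiW]
  have hlen : bpos m k + i < (phiW m (pref m (k + 1))).length := by
    rw [hsplit, List.length_append]
    exact Nat.add_lt_add_left hi _
  have := hP (bpos m k + i) hlen
  rw [hsplit] at this
  rw [Nat.zero_add] at this
  rw [this, List.getD_append_right]
  · congr 1; unfold bpos; omega
  · unfold bpos; omega

lemma mbon_bpos (m : ℕ) (hm : 2 ≤ m) (k : ℕ) : mbon m (bpos m k) = 0 := by
  have := block_letters m hm k (phiL_len_pos m (mbon m k))
  rw [Nat.add_zero] at this
  rw [this, phiL_getD_zero]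

lemma mbon_bpos_one (m : ℕ) (hm : 2 ≤ m) (k : ℕ)
    (h2 : (phiL m (mbon m k)).length = 2) :
    mbon m (bpos m k + 1) = mbon m k + 1 := by
  have := block_letters m hm k (i := 1) (by omega)
  rw [phiL_two m _ h2] at this
  simpa using this

lemma bpos_cover (m : ℕ) (j : ℕ) : ∃ k, bpos m k ≤ j ∧ j < bpos m (k + 1) := by
  induction j with
  | zero => exact ⟨0, by simp, by simpa using bpos_lt_succ m 0⟩
  | succ j ih =>
    obtain ⟨k, h1, h2⟩ := ih
    by_cases h : j + 1 < bpos m (k + 1)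
    · exact ⟨k, by omega, h⟩
    · exact ⟨k + 1, by omega, by have := bpos_lt_succ m (k + 1); omega⟩

/-- every occurrence of `0` is at a block start -/
lemma zero_blockstart (m : ℕ) (hm : 2 ≤ m) {j : ℕ} (h : mbon m j = 0) :
    ∃ k, bpos m k = j := by
  obtain ⟨k, h1, h2⟩ := bpos_cover m j
  rcases Nat.eq_or_lt_of_le h1 with he | hl
  · exact ⟨k, he⟩
  · exfalso
    rw [bpos_succ] at h2
    have hle := phiL_len_le m (mbon m k)
    have hj : j = bpos m k + 1 := by omega
    have hlen2 : (phiL m (mbon m k)).length = 2 := by omega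
    have := mbon_bpos_one m hm k hlen2
    rw [← hj, h] at this
    omega

/-- every occurrence of a nonzero letter is at a block start + 1 -/
lemma nonzero_blocksnd (m : ℕ) (hm : 2 ≤ m) {j a : ℕ} (h : mbon m j = a)
    (ha : a ≠ 0) : ∃ k, bpos m k + 1 = j ∧ bpos m (k + 1) = j + 1 ∧
      a = mbon m k + 1 := by
  obtain ⟨k, h1, h2⟩ := bpos_cover m j
  rcases Nat.eq_or_lt_of_le h1 with he | hl
  · exfalso; rw [← he, mbon_bpos m hm k] at h; exact ha h.symm
  · rw [bpos_succ] at h2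
    have hle := phiL_len_le m (mbon m k)
    have hj : j = bpos m k + 1 := by omega
    have hlen2 : (phiL m (mbon m k)).length = 2 := by omega
    refine ⟨k, hj.symm, by rw [bpos_succ, hlen2]; omega, ?_⟩
    rw [← h, hj]
    exact mbon_bpos_one m hm k hlen2

/-- the factor of `w` of length `n` starting at position `k` -/
def seg (m k n : ℕ) : List ℕ := (List.range n).map (fun i => mbon m (k + i))

@[simp] lemma seg_length (m k n : ℕ) : (seg m k n).length = n := by simp [seg]

lemma seg_getD (m k : ℕ) {n i : ℕ} (hi : i < n) :
    (seg m k n).getD i 0 = mbon m (k + i) := by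
  unfold seg
  rw [List.getD_eq_getElem _ _ (by simpa using hi)]
  simp

lemma seg_occurs (m k n : ℕ) : OccursAt (seg m k n) (mbon m) k := by
  intro i hi
  rw [seg_getD m k (by simpa using hi)]

lemma pref_add (m k n : ℕ) : pref m (k + n) = pref m k ++ seg m k n := by
  unfold pref seg
  rw [List.range_add, List.map_append, List.map_map]
  rfl

/-- key segment lemma: `w[bpos k .. bpos (k+n)) = φ(w[k..k+n))` -/
lemma segment_phiW (m : ℕ) (hm : 2 ≤ m) (k n : ℕ) :
    (phiW m (seg m k n)).length = bpos m (k + n) - bpos m k ∧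
    ∀ i < (phiW m (seg m k n)).length,
      mbon m (bpos m k + i) = (phiW m (seg m k n)).getD i 0 := by
  have hsplit : phiW m (pref m (k + n)) = phiW m (pref m k) ++ phiW m (seg m k n) := by
    rw [pref_add, phiW_append]
  have hlen : bpos m (k + n) = bpos m k + (phiW m (seg m k n)).length := by
    unfold bpos; rw [hsplit, List.length_append]
  refine ⟨by omega, ?_⟩
  intro i hi
  have hP := phiW_pref_infPrefix m hm (k + n)
  have hidx : bpos m k + i < (phiW m (pref m (k + n))).length := by
    show bpos m k + i < bpos m (k + n); omega
  have := hP (bpos m k + i) hidx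
  rw [Nat.zero_add, hsplit] at this
  rw [this, List.getD_append_right]
  · congr 1; unfold bpos; omega
  · unfold bpos; omega

end MbonAux3

namespace MbonAux4
open MbonAux MbonAux2 MbonAux3

lemma pal_getD {p : List ℕ} (hpal : Pal p) {i : ℕ} (hi : i < p.length) :
    p.getD (p.length - 1 - i) 0 = p.getD i 0 := by
  conv_rhs => rw [← hpal]
  rw [List.getD_eq_getElem _ _ (show p.length - 1 - i < p.length by omega),
    List.getD_eq_getElem _ _ (show i < p.reverse.length by simpa using hi),
    List.getElem_reverse]

lemma cancel_zero {u v : List ℕ} (h : u ++ [0] = v ++ [0]) : u = v := by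
  have := congrArg List.dropLast h
  simpa using this

end MbonAux4


open MbonAux MbonAux2 MbonAux3 MbonAux4

/-- Let `p` be a non-empty palindromic factor of the `m`-bonacci word `w_m`.
If `p` begins with the letter `0`, then `p = φ_m(p')·0` for some palindromic factor `p'`
of `w_m`; if `p` begins with a letter `a ≠ 0`, then `0·p = φ_m(p')` for some palindromic
factor `p'` of `w_m`. -/
theorem pal_factor_preimage (m : ℕ) (hm : 2 ≤ m) (p : List ℕ) (hp : p ≠ [])
    (hpal : Pal p) (hfac : FactorOf p (mbon m)) :
    (p.head? = some 0 →
      ∃ p', Pal p' ∧ FactorOf p' (mbon m) ∧ p = phiW m p' ++ [0]) ∧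
    (∀ a, p.head? = some a → a ≠ 0 →
      ∃ p', Pal p' ∧ FactorOf p' (mbon m) ∧ 0 :: p = phiW m p') := by
  obtain ⟨j, hocc⟩ := hfac
  have hlen : 0 < p.length := List.length_pos_iff.mpr hp
  have hhead_getD : ∀ a, p.head? = some a → p.getD 0 0 = a := by
    intro a ha
    cases p with
    | nil => simp at ha
    | cons b t => simp at ha ⊢; omega
  have hlast : p.getD (p.length - 1) 0 = p.getD 0 0 := by
    have := pal_getD hpal (i := 0) hlen
    simpa using this
  constructor
  · -- case: p starts with 0
    intro hhead
    have h0 : p.getD 0 0 = 0 := hhead_getD 0 hhead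
    have hj0 : mbon m j = 0 := by
      have := hocc 0 hlen
      rw [h0] at this
      simpa using this
    have hend0 : mbon m (j + (p.length - 1)) = 0 := by
      rw [hocc (p.length - 1) (by omega), hlast, h0]
    obtain ⟨k, hk⟩ := zero_blockstart m hm hj0
    obtain ⟨k', hk'⟩ := zero_blockstart m hm hend0
    have hkk' : k ≤ k' := by
      have := (bpos_strictMono m).le_iff_le (a := k) (b := k')
      omega
    have hseg := segment_phiW m hm k (k' - k)
    rw [show k + (k' - k) = k' from by omega, hk, hk'] at hseg
    obtain ⟨hseg1, hseg2⟩ := hseg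
    have hWlen : (phiW m (seg m k (k' - k))).length = p.length - 1 := by omega
    have hEq : p = phiW m (seg m k (k' - k)) ++ [0] := by
      apply List.ext_getElem
      · simp [hWlen]; omega
      · intro i h1 h2
        rw [← List.getD_eq_getElem _ 0 h1, ← List.getD_eq_getElem _ 0 h2]
        by_cases hi : i < (phiW m (seg m k (k' - k))).length
        · rw [List.getD_append _ _ _ _ hi, ← hseg2 i hi, hocc i (by omega)]
        · have hi' : i = p.length - 1 := by omega
          rw [List.getD_append_right _ _ _ _ (by omega), hi', hlast, h0]
          have : p.length - 1 - (phiW m (seg m k (k' - k))).length = 0 := by omega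
          rw [this]
          simp
    refine ⟨seg m k (k' - k), ?_, ⟨k, seg_occurs m k (k' - k)⟩, hEq⟩
    have h1 : phiW m (seg m k (k' - k)).reverse ++ [0]
        = phiW m (seg m k (k' - k)) ++ [0] := by
      calc phiW m (seg m k (k' - k)).reverse ++ [0]
          = 0 :: (phiW m (seg m k (k' - k))).reverse := (phiW_rev _ _).symm
        _ = (phiW m (seg m k (k' - k)) ++ [0]).reverse := by simp
        _ = p.reverse := by rw [← hEq]
        _ = p := hpal
        _ = phiW m (seg m k (k' - k)) ++ [0] := hEq
    exact phiW_inj m _ _ (cancel_zero h1)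
  · -- case: p starts with a ≠ 0
    intro a hhead ha
    have h0 : p.getD 0 0 = a := hhead_getD a hhead
    have hja : mbon m j = a := by
      have := hocc 0 hlen
      rw [h0] at this
      simpa using this
    have hend : mbon m (j + (p.length - 1)) = a := by
      rw [hocc (p.length - 1) (by omega), hlast, h0]
    obtain ⟨k, hk1, hk2, hk3⟩ := nonzero_blocksnd m hm hja ha
    obtain ⟨k'', hk''1, hk''2, hk''3⟩ := nonzero_blocksnd m hm hend ha
    have hkk : k < k'' + 1 := by
      have := (bpos_strictMono m).lt_iff_lt (a := k) (b := k'' + 1)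
      omega
    have hseg := segment_phiW m hm k (k'' + 1 - k)
    rw [show k + (k'' + 1 - k) = k'' + 1 from by omega, hk''2] at hseg
    obtain ⟨hseg1, hseg2⟩ := hseg
    have hWlen : (phiW m (seg m k (k'' + 1 - k))).length = p.length + 1 := by omega
    have hbk0 : mbon m (bpos m k) = 0 := mbon_bpos m hm k
    have hEq : 0 :: p = phiW m (seg m k (k'' + 1 - k)) := by
      apply List.ext_getElem
      · simp [hWlen]
      · intro i h1 h2
        rw [← List.getD_eq_getElem _ 0 h1, ← List.getD_eq_getElem _ 0 h2]
        have hi2 : i < (phiW m (seg m k (k'' + 1 - k))).length := h2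
        rw [← hseg2 i hi2]
        cases i with
        | zero =>
          simp only [List.getD_cons_zero]
          rw [Nat.add_zero, hbk0]
        | succ i' =>
          simp only [List.getD_cons_succ]
          have hi' : i' < p.length := by
            simp at h1; omega
          rw [show bpos m k + (i' + 1) = j + i' from by omega, hocc i' hi']
    refine ⟨seg m k (k'' + 1 - k), ?_, ⟨k, seg_occurs m k (k'' + 1 - k)⟩, hEq⟩
    have h1 : phiW m (seg m k (k'' + 1 - k)).reverse ++ [0]
        = phiW m (seg m k (k'' + 1 - k)) ++ [0] := by
      calc phiW m (seg m k (k'' + 1 - k)).reverse ++ [0]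
          = 0 :: (phiW m (seg m k (k'' + 1 - k))).reverse := (phiW_rev _ _).symm
        _ = 0 :: (0 :: p).reverse := by rw [← hEq]
        _ = 0 :: (p.reverse ++ [0]) := by simp
        _ = 0 :: (p ++ [0]) := by rw [hpal]
        _ = (0 :: p) ++ [0] := rfl
        _ = phiW m (seg m k (k'' + 1 - k)) ++ [0] := by rw [hEq]
    exact phiW_inj m _ _ (cancel_zero h1)
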